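/- Let T be a Souslin tree on which, for each level α, no two distinct nodes of T_α have the same number of immediate successors. Then T is totally rigid: T(s) and T(t) are non-isomorphic for all distinct nodes s, t of T. -/

import Mathlib

open Cardinal Ordinal Set

universe u

variable {α : Type u}

/-- `ht` is the height function of a tree order on `α`: predecessors of each node form a
chain (together with well-foundedness of `Ordinal`-valued height this means they are
well-ordered), heights are strictly monotone, and below each node every smaller ordinal
is realized as the height of a predecessor. -/
structure IsTreeHt [PartialOrder α] (ht : α → Ordinal) : Prop where
  pred_chain : ∀ t : α, IsChain (· < ·) (Set.Iio t)
  ht_lt : ∀ s t : α, s < t → ht s < ht t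
  ht_onto : ∀ t : α, ∀ β, β < ht t → ∃ s, s < t ∧ ht s = β

/-- Normality: unique root below everything, at least two immediate successors, successors
in every higher nonempty level, unique limits. -/
def IsNormalTree [PartialOrder α] (ht : α → Ordinal) : Prop :=
  (∃ r : α, ∀ t, r ≤ t) ∧
  (∀ t : α, ∃ s u : α, t < s ∧ t < u ∧ s ≠ u ∧ ht s = ht t + 1 ∧ ht u = ht t + 1) ∧
  (∀ t : α, ∀ β, ht t < β → (∃ u : α, ht u = β) → ∃ s, t < s ∧ ht s = β) ∧
  (∀ s t : α, ht s = ht t → Order.IsSuccLimit (ht s) → Set.Iio s = Set.Iio t → s = t)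

/-- Every node has exactly ℵ₀ immediate successors. -/
def Aleph0Splitting [PartialOrder α] (ht : α → Ordinal) : Prop :=
  ∀ t : α, {s | t < s ∧ ht s = ht t + 1}.Infinite ∧ {s | t < s ∧ ht s = ht t + 1}.Countable

/-- A Souslin tree: a tree of height ω₁ all of whose antichains and chains are countable. -/
def IsSouslinTree [PartialOrder α] (ht : α → Ordinal) : Prop :=
  IsTreeHt ht ∧
  (∀ t : α, ht t < (Cardinal.aleph 1).ord) ∧
  (∀ β, β < (Cardinal.aleph 1).ord → ∃ t : α, ht t = β) ∧
  (∀ A : Set α, IsAntichain (· ≤ ·) A → A.Countable) ∧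
  (∀ C : Set α, IsChain (· ≤ ·) C → C.Countable)

/-! An isomorphism `f : T(s) ≃o T(t)` shifts heights by `ht u ↦ ht t + (ht u - ht s)` and
preserves the number of immediate successors. On a countable, additively principal level `H`
above `s` and `t` the shift is the identity, so distinct valences force `f` to fix every node
of `T(s)` at level `H`: all of them lie above `t`. In a normal tree this gives `t ≤ s`, since
otherwise `s < t` and one of two immediate successors of `s` is not below `t`, hence neither
is any node of level `H` above it. Symmetrically `s ≤ t`. -/

section Cone

variable [PartialOrder α] {s t : α}

theorem coe_covBy_coe_iff {u v : {x : α // s ≤ x}} : (u : α) ⋖ v ↔ u ⋖ v :=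
  Set.OrdConnected.apply_covBy_apply_iff (OrderEmbedding.subtype fun x => s ≤ x)
    (by simpa using! Set.ordConnected_Ici)

theorem mk_covBy_apply (f : {x : α // s ≤ x} ≃o {x : α // t ≤ x})
    (u : {x : α // s ≤ x}) : #{x | (u : α) ⋖ x} = #{y | (f u : α) ⋖ y} := by
  refine Cardinal.mk_congr <|
    (Equiv.subtypeSubtypeEquivSubtype fun h => u.2.trans h.le).symm.trans <|
    (f.toEquiv.subtypeEquiv fun x => ?_).trans
      (Equiv.subtypeSubtypeEquivSubtype fun h => (f u).2.trans h.le)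
  simp only [Set.mem_ofPred_eq, OrderIso.coe_toEquiv, coe_covBy_coe_iff, apply_covBy_apply_iff]

end Cone

theorem Ordinal.exists_isPrincipal_add_between {c : Cardinal} (hc : ℵ₀ < c) {a : Ordinal}
    (ha : a < c.ord) : ∃ H, a < H ∧ H < c.ord ∧ IsPrincipal (· + ·) H :=
  ⟨ω ^ (a + 1), (lt_add_one a).trans_le (right_le_opow _ one_lt_omega0),
    isPrincipal_opow_ord hc.le (omega0_lt_ord.2 hc) ((isSuccLimit_ord hc.le).add_one_lt ha),
    isPrincipal_add_omega0_opow _⟩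

def DistinctValences [Preorder α] (ht : α → Ordinal) : Prop :=
  ∀ s t : α, ht s = ht t → s ≠ t → #{x | s ⋖ x} ≠ #{x | t ⋖ x}

namespace IsTreeHt

variable [PartialOrder α] {ht : α → Ordinal} {s t u : α}

theorem strictMono (hT : IsTreeHt ht) : StrictMono ht := fun _ _ => hT.ht_lt _ _

theorem le_or_le (hT : IsTreeHt ht) (hsu : s ≤ u) (htu : t ≤ u) : s ≤ t ∨ t ≤ s := by
  rcases hsu.eq_or_lt with rfl | hsu
  · exact Or.inr htu
  rcases htu.eq_or_lt with rfl | htu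
  · exact Or.inl hsu.le
  rcases eq_or_ne s t with rfl | hst
  · exact Or.inl le_rfl
  exact (hT.pred_chain u hsu htu hst).imp le_of_lt le_of_lt

theorem le_of_le_of_ht_le (hT : IsTreeHt ht) (hsu : s ≤ u) (htu : t ≤ u) (h : ht s ≤ ht t) :
    s ≤ t := by
  rcases hT.le_or_le hsu htu with hst | hts
  · exact hst
  · exact (eq_of_le_of_not_lt hts fun hlt => (hT.strictMono hlt).not_ge h).ge

theorem exists_le_lt_ht_eq (hT : IsTreeHt ht) (hsu : s ≤ u) {β : Ordinal} (hsβ : ht s ≤ β)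
    (hβu : β < ht u) : ∃ w, s ≤ w ∧ w < u ∧ ht w = β := by
  obtain ⟨w, hwu, rfl⟩ := hT.ht_onto u β hβu
  exact ⟨w, hT.le_of_le_of_ht_le hsu hwu.le hsβ, hwu, rfl⟩

theorem covBy_iff (hT : IsTreeHt ht) : s ⋖ u ↔ s < u ∧ ht u = ht s + 1 := by
  constructor
  · intro h
    refine ⟨h.lt, le_antisymm (not_lt.1 fun hlt => ?_)
      (Order.add_one_le_of_lt (hT.strictMono h.lt))⟩
    obtain ⟨w, hsw, hwu, hw⟩ := hT.exists_le_lt_ht_eq h.le le_self_add hlt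
    refine h.2 (hsw.lt_of_ne ?_) hwu
    rintro rfl
    exact (lt_add_one _).ne hw
  · rintro ⟨hsu, hu⟩
    refine ⟨hsu, fun w hsw hwu => ?_⟩
    have hwu := hT.strictMono hwu
    rw [hu, Order.lt_add_one_iff] at hwu
    exact hwu.not_gt (hT.strictMono hsw)

theorem add_sub_le_ht_apply (hT : IsTreeHt ht) (f : {x : α // s ≤ x} ≃o {x : α // t ≤ x})
    (u : {x : α // s ≤ x}) : ht t + (ht u - ht s) ≤ ht (f u) := by
  induction u using (InvImage.wf (fun u : {x : α // s ≤ x} => ht u) wellFounded_lt).induction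
    with | _ u IH => ?_
  rcases eq_or_ne (ht u - ht s) 0 with h0 | h0
  · rw [h0, add_zero]
    exact hT.strictMono.monotone (f u).2
  refine (Ordinal.add_le_iff h0).2 fun δ hδ => ?_
  obtain ⟨w, hsw, hwu, hw⟩ := hT.exists_le_lt_ht_eq u.2 le_self_add (Ordinal.lt_sub.1 hδ)
  have hwu' : (⟨w, hsw⟩ : {x : α // s ≤ x}) < u := hwu
  calc ht t + δ = ht t + (ht w - ht s) := by rw [hw, Ordinal.add_sub_cancel]
    _ ≤ ht (f ⟨w, hsw⟩) := IH _ (hT.strictMono hwu)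
    _ < ht (f u) := hT.strictMono (f.lt_iff_lt.2 hwu')

theorem ht_apply (hT : IsTreeHt ht) (f : {x : α // s ≤ x} ≃o {x : α // t ≤ x})
    (u : {x : α // s ≤ x}) : ht (f u) = ht t + (ht u - ht s) := by
  refine le_antisymm ?_ (hT.add_sub_le_ht_apply f u)
  have h := hT.add_sub_le_ht_apply f.symm (f u)
  rw [f.symm_apply_apply, ← Ordinal.add_sub_cancel_of_le (hT.strictMono.monotone u.2),
    add_le_add_iff_left] at h
  calc ht (f u) = ht t + (ht (f u) - ht t) :=
        (Ordinal.add_sub_cancel_of_le (hT.strictMono.monotone (f u).2)).symm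
    _ ≤ ht t + (ht u - ht s) := add_le_add_right h _


theorem coe_apply_eq_self (hT : IsTreeHt ht) (hval : DistinctValences ht)
    (f : {x : α // s ≤ x} ≃o {x : α // t ≤ x}) {H : Ordinal} (hH : IsPrincipal (· + ·) H)
    (hsH : ht s < H) (htH : ht t < H) (u : {x : α // s ≤ x}) (hu : ht u = H) :
    (f u : α) = u := by
  by_contra hne
  refine hval _ _ ?_ hne (mk_covBy_apply f u).symm
  rw [hT.ht_apply, hu, Ordinal.sub_eq_of_add_eq (hH.add_eq_right hsH), hH.add_eq_right htH]

theorem le_of_forall_le_of_ht_eq (hT : IsTreeHt ht) (hN : IsNormalTree ht) {H : Ordinal}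
    (hH : ∃ u, ht u = H) (hsH : ht s + 1 < H) (h : ∀ w, s ≤ w → ht w = H → t ≤ w) :
    t ≤ s := by
  obtain ⟨-, hsucc, hext, -⟩ := hN
  have comparable : ∀ v, s ≤ v → ht v < H → v ≤ t ∨ t ≤ v := fun v hsv hvH => by
    obtain ⟨w, hvw, rfl⟩ := hext v _ hvH hH
    exact hT.le_or_le hvw.le (h w (hsv.trans hvw.le) rfl)
  rcases comparable s le_rfl ((lt_add_one _).trans hsH) with hst | hts
  · by_contra hts
    have hst : s < t := hst.lt_of_ne fun e => hts e.ge
    have below : ∀ s', s ⋖ s' → s' ≤ t := fun s' hs' => by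
      rcases comparable s' hs'.le (by rwa [(hT.covBy_iff.1 hs').2]) with hs't | hts'
      · exact hs't
      · exact ((hs'.eq_or_eq hst.le hts').resolve_left hst.ne').ge
    obtain ⟨s₁, s₂, h₁, h₂, hne, hh₁, hh₂⟩ := hsucc s
    have hb₁ := below s₁ (hT.covBy_iff.2 ⟨h₁, hh₁⟩)
    have hb₂ := below s₂ (hT.covBy_iff.2 ⟨h₂, hh₂⟩)
    exact hne (le_antisymm (hT.le_of_le_of_ht_le hb₁ hb₂ (hh₁.trans hh₂.symm).le)
      (hT.le_of_le_of_ht_le hb₂ hb₁ (hh₂.trans hh₁.symm).le))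
  · exact hts

theorem le_of_orderIso (hT : IsTreeHt ht) (hN : IsNormalTree ht) (hval : DistinctValences ht)
    (f : {x : α // s ≤ x} ≃o {x : α // t ≤ x}) {H : Ordinal} (hH : IsPrincipal (· + ·) H)
    (hHex : ∃ u, ht u = H) (hsH : ht s + 1 < H) (htH : ht t + 1 < H) : t ≤ s :=
  hT.le_of_forall_le_of_ht_eq hN hHex hsH fun w hsw hw =>
    (f ⟨w, hsw⟩).2.trans_eq <| hT.coe_apply_eq_self hval f hH
      ((lt_add_one _).trans hsH) ((lt_add_one _).trans htH) ⟨w, hsw⟩ hw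

end IsTreeHt

/-- If on each level of a normal Souslin tree no two distinct nodes have the same number
of immediate successors, then the tree is totally rigid. -/
theorem distinct_valences_totally_rigid [PartialOrder α] (ht : α → Ordinal)
    (hS : IsSouslinTree ht) (hN : IsNormalTree ht)
    (hval : ∀ s t : α, ht s = ht t → s ≠ t →
      #({u : α | s < u ∧ ht u = ht s + 1}) ≠ #({u : α | t < u ∧ ht u = ht t + 1})) :
    ∀ s t : α, s ≠ t → IsEmpty ({x : α // s ≤ x} ≃o {x : α // t ≤ x}) := by
  obtain ⟨hT, hbound, honto, -, -⟩ := hS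
  have hval' : DistinctValences ht := by simpa only [DistinctValences, hT.covBy_iff] using hval
  intro s t hst
  obtain ⟨H, hmH, hHω, hH⟩ := Ordinal.exists_isPrincipal_add_between aleph0_lt_aleph_one
    ((isSuccLimit_ord (aleph0_le_aleph 1)).add_one_lt (max_lt (hbound s) (hbound t)))
  have hsH : ht s + 1 < H := (add_le_add_left (le_max_left _ _) 1).trans_lt hmH
  have htH : ht t + 1 < H := (add_le_add_left (le_max_right _ _) 1).trans_lt hmH
  exact ⟨fun f => hst (le_antisymm (hT.le_of_orderIso hN hval' f.symm hH (honto H hHω) htH hsH)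
    (hT.le_of_orderIso hN hval' f hH (honto H hHω) hsH htH))⟩
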